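/- Let G be a simple graph on a countable vertex set. Then G satisfies condition (A) if and only if for every independent subgraph W of G and every vertex s ∈ V \ W, there exists a vertex v ∈ V \ W with {s, v} an edge of G. -/

import Mathlib

namespace PaperMatchings

variable {V : Type*}

/-- The support of a set of edges: all vertices incident to some edge in `M`. -/
def supp (M : Set (Sym2 V)) : Set V := {v | ∃ e ∈ M, v ∈ e}

/-- `M` is a matching of `G`: a set of edges of `G` such that no vertex is
incident to more than one edge of `M`. -/
def IsMatching (G : SimpleGraph V) (M : Set (Sym2 V)) : Prop :=
  M ⊆ G.edgeSet ∧ ∀ (v : V), ∀ e ∈ M, ∀ e' ∈ M, v ∈ e → v ∈ e' → e = e'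

/-- A perfect matching: a matching whose support is all of `V`. -/
def IsPerfectMatching (G : SimpleGraph V) (M : Set (Sym2 V)) : Prop :=
  IsMatching G M ∧ supp M = Set.univ

/-- A (finite or infinite) path in `G`, given by its number of vertices `n : ℕ∞`
(`⊤` meaning infinite) and the enumeration `f` of its vertices: it is injective on
indices below `n` and consecutive vertices are adjacent. -/
def IsPath (G : SimpleGraph V) (n : ℕ∞) (f : ℕ → V) : Prop :=
  1 ≤ n ∧
  (∀ i j : ℕ, (i : ℕ∞) < n → (j : ℕ∞) < n → f i = f j → i = j) ∧
  (∀ i : ℕ, ((i : ℕ∞) + 1) < n → G.Adj (f i) (f (i + 1)))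

/-- The consecutive edges of the path lie alternately in `M` and outside `M`. -/
def IsAlternating (M : Set (Sym2 V)) (n : ℕ∞) (f : ℕ → V) : Prop :=
  ∀ i : ℕ, ((i : ℕ∞) + 2) < n →
    (s(f i, f (i + 1)) ∈ M ↔ s(f (i + 1), f (i + 2)) ∉ M)

/-- An `M`-augmenting path starting at `s`: an `M`-alternating path (with at least one
edge) starting at the unmatched vertex `s`, which is either infinite or ends at an
unmatched vertex. -/
def IsAugmentingPath (G : SimpleGraph V) (M : Set (Sym2 V)) (n : ℕ∞) (f : ℕ → V)
    (s : V) : Prop :=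
  IsPath G n f ∧ IsAlternating M n f ∧ 1 < n ∧ f 0 = s ∧ s ∉ supp M ∧
  ∀ k : ℕ, n = (k : ℕ∞) + 1 → f k ∉ supp M

/-- The path contains at least one edge of `M`. -/
def IsProper (M : Set (Sym2 V)) (n : ℕ∞) (f : ℕ → V) : Prop :=
  ∃ i : ℕ, ((i : ℕ∞) + 1) < n ∧ s(f i, f (i + 1)) ∈ M

/-- Condition (A): for every matching `M` and every vertex `s` not in the support
of `M` there is an `M`-augmenting path starting at `s`. -/
def ConditionA (G : SimpleGraph V) : Prop :=
  ∀ M : Set (Sym2 V), IsMatching G M → ∀ s : V, s ∉ supp M →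
    ∃ (n : ℕ∞) (f : ℕ → V), IsAugmentingPath G M n f s

/-- An independent matching: a matching admitting no proper augmenting path. -/
def IndepMatching (G : SimpleGraph V) (M : Set (Sym2 V)) : Prop :=
  IsMatching G M ∧
    ¬ ∃ (s : V) (n : ℕ∞) (f : ℕ → V), IsAugmentingPath G M n f s ∧ IsProper M n f

/-- The induced subgraph of `G` on the vertex set `S` (vertices outside `S`
become isolated). -/
def restrict (G : SimpleGraph V) (S : Set V) : SimpleGraph V where
  Adj u v := G.Adj u v ∧ u ∈ S ∧ v ∈ S
  symm := by
    constructor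
    intro u v h
    exact ⟨h.1.symm, h.2.2, h.2.1⟩
  loopless := by
    constructor
    intro v h
    exact (G.ne_of_adj h.1) rfl

/-- `W` is an independent subgraph of `G`: the induced subgraph `G[W]` has a perfect
matching (i.e. `G` has a matching with support exactly `W`) and every such matching
is an independent matching of `G`. -/
def IndepSubgraph (G : SimpleGraph V) (W : Set V) : Prop :=
  (∃ M, IsMatching G M ∧ supp M = W) ∧
  ∀ M, IsMatching G M → supp M = W → IndepMatching G M

/-- The induced subgraph `G[W]` satisfies condition (A): for every matching of
`G[W]` and every vertex of `W` not in its support, there is an augmenting path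
inside `G[W]`. -/
def ConditionAOn (G : SimpleGraph V) (W : Set V) : Prop :=
  ∀ M : Set (Sym2 V), IsMatching (restrict G W) M → ∀ s ∈ W, s ∉ supp M →
    ∃ (n : ℕ∞) (f : ℕ → V), IsAugmentingPath (restrict G W) M n f s


/-!
If `G` satisfies (A) and `M` is a perfect matching of an independent subgraph `W`, an
`M`-augmenting path from `s ∉ W` contains no edge of `M`, so it is a single edge leaving `W`.

Conversely, let `M` be a matching and `s ∉ V(M)` with no `M`-augmenting path from `s`, and let `W`
be the set of vertices reached from `s` by nontrivial `M`-alternating paths starting with an edge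
outside `M`. It contains every neighbour of `s` but not `s`, and `M` matches `W` to itself. If a
perfect matching `M₂` of `G[W]` had a proper augmenting path from `t`, flipping `M₂` along it would
give a matching `N` covering `W ∪ {t}`. The alternating path of `N ∆ M₀` from `t` (with `M₀` the
part of `M` inside `W`) is `M`-alternating, passes through `W` and ends outside `W` or is infinite.
Splicing an alternating path from `s` to its first vertex on this path with the appropriate half of
it reaches a vertex outside `W` alternatingly from `s`, or is an infinite augmenting path from `s`.
-/

section Matching

variable {G : SimpleGraph V} {M N : Set (Sym2 V)} {u v w : V}

lemma mem_supp_iff_exists : v ∈ supp M ↔ ∃ w, s(v, w) ∈ M := by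
  refine ⟨fun ⟨e, he, hv⟩ => ?_, fun ⟨w, h⟩ => ⟨_, h, Sym2.mem_mk_left _ _⟩⟩
  obtain ⟨w, rfl⟩ := Sym2.mem_iff_exists.mp hv
  exact ⟨w, he⟩

lemma IsMatching.adj (hM : IsMatching G M) (h : s(u, v) ∈ M) : G.Adj u v := hM.1 h

lemma IsMatching.mono (hM : IsMatching G M) (h : N ⊆ M) : IsMatching G N :=
  ⟨h.trans hM.1, fun v _ he _ he' => hM.2 v _ (h he) _ (h he')⟩

lemma IsMatching.eq_of_mem (hM : IsMatching G M) (h : s(v, u) ∈ M) (h' : s(v, w) ∈ M) :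
    u = w := by
  rcases Sym2.eq_iff.mp (hM.2 v _ h _ h' (Sym2.mem_mk_left _ _) (Sym2.mem_mk_left _ _))
    with ⟨-, huw⟩ | ⟨hvw, huv⟩
  · exact huw
  · exact huv.trans hvw

lemma IsMatching.mem_sdiff_of_mem_sdiff (hN : IsMatching G N) (h : s(u, v) ∈ N \ M)
    (h' : s(v, w) ∈ M) : s(v, w) ∈ M \ N := by
  refine ⟨h', fun hw => h.2 ?_⟩
  rwa [hN.2 v _ h.1 _ hw (Sym2.mem_mk_right _ _) (Sym2.mem_mk_left _ _)]

end Matching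

section AltPath

variable {G : SimpleGraph V} {M : Set (Sym2 V)} {n ℓ : ℕ∞} {p : ℕ} {q r : ℕ → V} {s : V}

/-- The parity offset `p` lets a segment cut out of an alternating path keep its pattern; for
`p = 0` the first edge is not in `M`. -/
def IsAltPath (G : SimpleGraph V) (M : Set (Sym2 V)) (p : ℕ) (n : ℕ∞) (q : ℕ → V) : Prop :=
  IsPath G n q ∧ ∀ i : ℕ, (i : ℕ∞) + 1 < n → (s(q i, q (i + 1)) ∈ M ↔ Odd (p + i))

lemma IsAugmentingPath.isAltPath (h : IsAugmentingPath G M n q s) : IsAltPath G M 0 n q := by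
  obtain ⟨hP, halt, -, rfl, hs, -⟩ := h
  refine ⟨hP, fun i => ?_⟩
  induction i with
  | zero =>
    intro _
    simpa using fun h => hs ⟨_, h, Sym2.mem_mk_left _ _⟩
  | succ i ih =>
    intro hi
    push_cast at hi
    have hstep := halt i (by rwa [add_assoc, one_add_one_eq_two] at hi)
    rw [ih ((le_self_add).trans_lt hi), zero_add] at hstep
    rw [zero_add, Nat.odd_add_one, hstep, not_not]

lemma IsAltPath.isAugmentingPath (h : IsAltPath G M 0 n q) (hs : q 0 ∉ supp M) (hn : 1 < n)
    (hend : ∀ k : ℕ, n = k + 1 → q k ∉ supp M) : IsAugmentingPath G M n q (q 0) := by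
  refine ⟨h.1, fun i hi => ?_, hn, rfl, hs, hend⟩
  have hi1 : ((i + 1 : ℕ) : ℕ∞) + 1 < n := by
    push_cast; rwa [add_assoc, one_add_one_eq_two]
  have hnext := h.2 (i + 1) hi1
  rw [h.2 i ((le_self_add).trans_lt hi1), zero_add, ← not_iff_not, not_not, hnext, zero_add,
    Nat.odd_add_one]

lemma IsAltPath.mono {k : ℕ∞} (h : IsAltPath G M p n q) (hk : 1 ≤ k) (hkn : k ≤ n) :
    IsAltPath G M p k q :=
  ⟨⟨hk, fun i j hi hj => h.1.2.1 i j (hi.trans_le hkn) (hj.trans_le hkn),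
    fun i hi => h.1.2.2 i (hi.trans_le hkn)⟩, fun i hi => h.2 i (hi.trans_le hkn)⟩

lemma IsAltPath.of_mod_two_eq {p' : ℕ} (h : IsAltPath G M p n q) (hp : p % 2 = p' % 2) :
    IsAltPath G M p' n q :=
  ⟨h.1, fun i hi => by rw [h.2 i hi, Nat.odd_iff, Nat.odd_iff, Nat.add_mod, hp, ← Nat.add_mod]⟩

lemma natCast_add_add_lt_iff {j k : ℕ} {d : ℕ∞} :
    ((j + k : ℕ) : ℕ∞) + d < j + ℓ ↔ (k : ℕ∞) + d < ℓ := by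
  rw [Nat.cast_add, add_assoc, ENat.add_lt_add_iff_left (ENat.natCast_ne_top j)]

lemma natCast_add_lt_iff {j k : ℕ} : ((j + k : ℕ) : ℕ∞) < j + ℓ ↔ (k : ℕ∞) < ℓ := by
  rw [Nat.cast_add, ENat.add_lt_add_iff_left (ENat.natCast_ne_top j)]

lemma IsAltPath.shift {c : ℕ} (h : IsAltPath G M p (c + ℓ) q) (hℓ : 1 ≤ ℓ) :
    IsAltPath G M (p + c) ℓ (fun k => q (c + k)) := by
  refine ⟨⟨hℓ, fun i j hi hj hij => ?_, fun i hi => ?_⟩, fun i hi => ?_⟩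
  · have := h.1.2.1 (c + i) (c + j) (natCast_add_lt_iff.mpr hi) (natCast_add_lt_iff.mpr hj) hij
    omega
  · exact h.1.2.2 (c + i) (natCast_add_add_lt_iff.mpr hi)
  · dsimp only
    rw [add_assoc]
    exact h.2 (c + i) (natCast_add_add_lt_iff.mpr hi)

lemma IsAltPath.reverse {c : ℕ} (h : IsAltPath G M p n q) (hc : (c : ℕ∞) < n) :
    IsAltPath G M (p + c + 1) (c + 1) (fun k => q (c - k)) := by
  have hlt : ∀ {i : ℕ}, i ≤ c → (i : ℕ∞) < n := fun hi => (Nat.cast_le.mpr hi).trans_lt hc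
  have hedge : ∀ {k : ℕ}, (k : ℕ∞) + 1 < c + 1 → ((c - (k + 1) : ℕ) : ℕ∞) + 1 < n ∧
      c - k = c - (k + 1) + 1 := by
    intro k hk
    have hkc : k + 1 < c + 1 := by exact_mod_cast hk
    exact ⟨by exact_mod_cast hlt (show c - (k + 1) + 1 ≤ c by omega), by omega⟩
  refine ⟨⟨le_add_self, fun i j hi hj hij => ?_, fun k hk => ?_⟩, fun k hk => ?_⟩
  · have hi' : i ≤ c := by exact_mod_cast Order.le_of_lt_add_one hi
    have hj' : j ≤ c := by exact_mod_cast Order.le_of_lt_add_one hj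
    have := h.1.2.1 _ _ (hlt (Nat.sub_le c i)) (hlt (Nat.sub_le c j)) hij
    omega
  · obtain ⟨hk', hck⟩ := hedge hk
    dsimp only
    rw [hck]
    exact (h.1.2.2 _ hk').symm
  · obtain ⟨hk', hck⟩ := hedge hk
    have hkc : k + 1 < c + 1 := by exact_mod_cast hk
    dsimp only
    rw [hck, Sym2.eq_swap, h.2 _ hk', Nat.odd_iff, Nat.odd_iff]
    omega

def pathAppend (q r : ℕ → V) (j i : ℕ) : V := if i ≤ j then q i else r (i - j)

lemma pathAppend_of_le {j i : ℕ} (h : i ≤ j) : pathAppend q r j i = q i := if_pos h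

lemma pathAppend_add {j : ℕ} (hjoin : r 0 = q j) (k : ℕ) : pathAppend q r j (j + k) = r k := by
  unfold pathAppend
  split_ifs with h
  · obtain rfl : k = 0 := by omega
    exact hjoin.symm
  · rw [Nat.add_sub_cancel_left]

lemma IsAltPath.append {j : ℕ} (hq : IsAltPath G M p (j + 1) q) (hr : IsAltPath G M (p + j) ℓ r)
    (hjoin : r 0 = q j) (hdisj : ∀ i < j, ∀ k : ℕ, (k : ℕ∞) < ℓ → q i ≠ r k) :
    IsAltPath G M p (j + ℓ) (pathAppend q r j) := by
  have hq_lt : ∀ {i : ℕ}, i < j → (i : ℕ∞) < j + 1 := fun hi => by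
    exact_mod_cast hi.trans j.lt_succ_self
  have hsplit : ∀ i : ℕ, i < j ∨ ∃ k, i = j + k := fun i =>
    (lt_or_ge i j).imp_right fun h => ⟨i - j, by omega⟩
  refine ⟨⟨hr.1.1.trans le_add_self, fun i i' hi hi' h => ?_, fun i hi => ?_⟩, fun i hi => ?_⟩
  · rcases hsplit i with hij | ⟨k, rfl⟩ <;> rcases hsplit i' with hij' | ⟨k', rfl⟩
    · rw [pathAppend_of_le hij.le, pathAppend_of_le hij'.le] at h
      exact hq.1.2.1 i i' (hq_lt hij) (hq_lt hij') h
    · rw [pathAppend_of_le hij.le, pathAppend_add hjoin] at h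
      exact absurd h (hdisj i hij k' (natCast_add_lt_iff.mp hi'))
    · rw [pathAppend_of_le hij'.le, pathAppend_add hjoin] at h
      exact absurd h.symm (hdisj i' hij' k (natCast_add_lt_iff.mp hi))
    · rw [pathAppend_add hjoin, pathAppend_add hjoin] at h
      rw [hr.1.2.1 k k' (natCast_add_lt_iff.mp hi) (natCast_add_lt_iff.mp hi') h]
  · rcases hsplit i with hij | ⟨k, rfl⟩
    · rw [pathAppend_of_le hij.le, pathAppend_of_le hij]
      exact hq.1.2.2 i (by exact_mod_cast Nat.succ_lt_succ hij)
    · rw [pathAppend_add hjoin, add_assoc, pathAppend_add hjoin]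
      exact hr.1.2.2 k (natCast_add_add_lt_iff.mp hi)
  · rcases hsplit i with hij | ⟨k, rfl⟩
    · rw [pathAppend_of_le hij.le, pathAppend_of_le hij]
      exact hq.2 i (by exact_mod_cast Nat.succ_lt_succ hij)
    · rw [pathAppend_add hjoin, add_assoc, pathAppend_add hjoin, ← add_assoc]
      exact hr.2 k (natCast_add_add_lt_iff.mp hi)

lemma IsAltPath.compl (h : IsAltPath G M p n q) : IsAltPath G Mᶜ (p + 1) n q :=
  ⟨h.1, fun i hi => by rw [Set.mem_compl_iff, h.2 i hi, add_right_comm, Nat.odd_add_one]⟩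

lemma IsAltPath.exists_partner (h : IsAltPath G M p n q) {i : ℕ} (hi : 0 < i)
    (hin : (i : ℕ∞) + 1 < n) :
    ∃ j : ℕ, (j = i + 1 ∨ j + 1 = i) ∧ (j : ℕ∞) < n ∧ s(q i, q j) ∈ M := by
  by_cases hodd : Odd (p + i)
  · exact ⟨i + 1, Or.inl rfl, by exact_mod_cast hin, (h.2 i hin).mpr hodd⟩
  · obtain ⟨k, rfl⟩ : ∃ k, i = k + 1 := ⟨i - 1, by omega⟩
    push_cast at hin
    have hk : (k : ℕ∞) + 1 < n := le_self_add.trans_lt hin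
    refine ⟨k, Or.inr rfl, le_self_add.trans_lt hk, ?_⟩
    rw [Sym2.eq_swap, h.2 k hk]
    rw [← add_assoc, Nat.odd_add_one, not_not] at hodd
    exact hodd

end AltPath

section Flip

variable {G : SimpleGraph V} {M : Set (Sym2 V)} {n : ℕ∞} {f : ℕ → V} {t v : V}

def pathEdges (n : ℕ∞) (f : ℕ → V) : Set (Sym2 V) :=
  {e | ∃ i : ℕ, (i : ℕ∞) + 1 < n ∧ e = s(f i, f (i + 1))}

lemma mem_pathEdges_of_adj {i j : ℕ} (hij : j = i + 1 ∨ j + 1 = i) (hi : (i : ℕ∞) < n)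
    (hj : (j : ℕ∞) < n) : s(f i, f j) ∈ pathEdges n f := by
  rcases hij with rfl | rfl
  · exact ⟨i, by exact_mod_cast hj, rfl⟩
  · exact ⟨j, by exact_mod_cast hi, Sym2.eq_swap⟩

lemma exists_eq_of_mem_pathEdge {a : ℕ} (ha : (a : ℕ∞) + 1 < n) (hv : v ∈ s(f a, f (a + 1))) :
    ∃ x : ℕ, (x = a ∨ x = a + 1) ∧ (x : ℕ∞) < n ∧ v = f x := by
  rcases Sym2.mem_iff.mp hv with rfl | rfl
  · exact ⟨a, Or.inl rfl, le_self_add.trans_lt ha, rfl⟩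
  · exact ⟨a + 1, Or.inr rfl, by exact_mod_cast ha, rfl⟩

lemma IsAugmentingPath.interior_of_mem_supp (h : IsAugmentingPath G M n f t) {i : ℕ}
    (hi : (i : ℕ∞) < n) (hmem : f i ∈ supp M) : 0 < i ∧ (i : ℕ∞) + 1 < n :=
  ⟨Nat.pos_of_ne_zero (by rintro rfl; exact h.2.2.2.2.1 (h.2.2.2.1 ▸ hmem)),
    (Order.add_one_le_of_lt hi).lt_of_ne fun he => h.2.2.2.2.2 i he.symm hmem⟩

lemma IsAugmentingPath.mem_pathEdges_of_mem (hM : IsMatching G M)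
    (h : IsAugmentingPath G M n f t) {e : Sym2 V} {i : ℕ} (he : e ∈ M) (hi : (i : ℕ∞) < n)
    (hfi : f i ∈ e) : e ∈ pathEdges n f := by
  obtain ⟨hi0, hin⟩ := h.interior_of_mem_supp hi ⟨e, he, hfi⟩
  obtain ⟨j, hij, hj, hjM⟩ := h.isAltPath.exists_partner hi0 hin
  rw [hM.2 _ e he _ hjM hfi (Sym2.mem_mk_left _ _)]
  exact mem_pathEdges_of_adj hij hi hj

lemma IsAugmentingPath.isMatching_symmDiff (hM : IsMatching G M)
    (h : IsAugmentingPath G M n f t) : IsMatching G (symmDiff M (pathEdges n f)) := by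
  have hA := h.isAltPath
  refine ⟨fun e he => ?_, fun v e he e' he' hv hv' => ?_⟩
  · rcases Set.mem_symmDiff.mp he with ⟨heM, -⟩ | ⟨⟨a, ha, rfl⟩, -⟩
    · exact hM.1 heM
    · exact hA.1.2.2 a ha
  rcases Set.mem_symmDiff.mp he with ⟨heM, heP⟩ | ⟨⟨a, ha, rfl⟩, haM⟩ <;>
    rcases Set.mem_symmDiff.mp he' with ⟨he'M, he'P⟩ | ⟨⟨b, hb, rfl⟩, hbM⟩
  · exact hM.2 v e heM e' he'M hv hv'
  · obtain ⟨x, -, hx, rfl⟩ := exists_eq_of_mem_pathEdge hb hv'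
    exact absurd (h.mem_pathEdges_of_mem hM heM hx hv) heP
  · obtain ⟨x, -, hx, rfl⟩ := exists_eq_of_mem_pathEdge ha hv
    exact absurd (h.mem_pathEdges_of_mem hM he'M hx hv') he'P
  · -- two path edges outside `M` have even indices, so they cannot be consecutive
    obtain ⟨x, hxa, hx, rfl⟩ := exists_eq_of_mem_pathEdge ha hv
    obtain ⟨y, hyb, hy, hxy⟩ := exists_eq_of_mem_pathEdge hb hv'
    have hxy := hA.1.2.1 x y hx hy hxy
    rw [hA.2 a ha, zero_add, Nat.odd_iff] at haM
    rw [hA.2 b hb, zero_add, Nat.odd_iff] at hbM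
    obtain rfl : a = b := by omega
    rfl

lemma IsAugmentingPath.supp_subset_supp_symmDiff (h : IsAugmentingPath G M n f t) :
    supp M ⊆ supp (symmDiff M (pathEdges n f)) := by
  rintro v ⟨e, he, hve⟩
  by_cases heP : e ∈ pathEdges n f
  · obtain ⟨a, ha, rfl⟩ := heP
    obtain ⟨x, -, hx, rfl⟩ := exists_eq_of_mem_pathEdge ha hve
    obtain ⟨hx0, hxn⟩ := h.interior_of_mem_supp hx ⟨_, he, hve⟩
    obtain ⟨j, hxj, hj, hjM⟩ := h.isAltPath.compl.exists_partner hx0 hxn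
    exact ⟨_, Set.mem_symmDiff.mpr (Or.inr ⟨mem_pathEdges_of_adj hxj hx hj, hjM⟩),
      Sym2.mem_mk_left _ _⟩
  · exact ⟨e, Set.mem_symmDiff.mpr (Or.inl ⟨he, heP⟩), hve⟩

end Flip

section AltWalk

variable {G : SimpleGraph V} {A B : Set (Sym2 V)} {t v : V}

open Classical in
/-- Junk value: `partner A v = v` when no edge of `A` meets `v`. -/
noncomputable def partner (A : Set (Sym2 V)) (v : V) : V :=
  if h : ∃ w, s(v, w) ∈ A then h.choose else v

lemma partner_mem (h : ∃ w, s(v, w) ∈ A) : s(v, partner A v) ∈ A := by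
  rw [partner, dif_pos h]
  exact h.choose_spec

def alternate (A B : Set (Sym2 V)) (k : ℕ) : Set (Sym2 V) := if k % 2 = 0 then A else B

lemma alternate_congr {a b : ℕ} (h : a % 2 = b % 2) : alternate A B a = alternate A B b := by
  rw [alternate, alternate, h]

lemma alternate_of_mod_two_eq_zero {k : ℕ} (h : k % 2 = 0) : alternate A B k = A := if_pos h

lemma alternate_of_mod_two_eq_one {k : ℕ} (h : k % 2 = 1) : alternate A B k = B :=
  if_neg (by omega)

lemma isMatching_alternate (hA : IsMatching G A) (hB : IsMatching G B) (k : ℕ) :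
    IsMatching G (alternate A B k) := by
  unfold alternate
  split_ifs
  exacts [hA, hB]

noncomputable def altWalk (A B : Set (Sym2 V)) (t : V) : ℕ → V
  | 0 => t
  | k + 1 => partner (alternate A B k) (altWalk A B t k)

/-- Since `t` is not covered by `B`, the walk could only close up by stepping back along the
edge it arrived on, which the matching property forbids. -/
lemma altWalk_ne (hA : IsMatching G A) (hB : IsMatching G B) (ht : t ∉ supp B) {m : ℕ}
    (hm : ∀ k < m, s(altWalk A B t k, altWalk A B t (k + 1)) ∈ alternate A B k) :
    ∀ b ≤ m, ∀ a < b, altWalk A B t a ≠ altWalk A B t b := by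
  set x := altWalk A B t
  have hT := isMatching_alternate hA hB
  intro b
  induction b using Nat.strong_induction_on with
  | _ b IH =>
  intro hbm a hab hxab
  obtain ⟨b, rfl⟩ : ∃ b', b = b' + 1 := ⟨b - 1, by omega⟩
  have hin : s(x a, x b) ∈ alternate A B b := by
    rw [hxab, Sym2.eq_swap]
    exact hm b (by omega)
  rcases a with _ | a
  · have hb : b % 2 = 0 := by
      by_contra hodd
      rw [alternate, if_neg hodd] at hin
      exact ht ⟨_, hin, Sym2.mem_mk_left _ _⟩
    have h0 : s(x 0, x 1) ∈ alternate A B b :=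
      alternate_congr (show 0 % 2 = b % 2 by omega) ▸ hm 0 (by omega)
    obtain rfl | hb2 : b = 0 ∨ 2 ≤ b := by omega
    · exact ((hT 0).adj hin).ne rfl
    · exact IH b (by omega) (by omega) 1 (by omega) ((hT b).eq_of_mem h0 hin)
  · have ha : s(x (a + 1), x a) ∈ alternate A B a := Sym2.eq_swap ▸ hm a (by omega)
    have ha' : s(x (a + 1), x (a + 2)) ∈ alternate A B (a + 1) := hm (a + 1) (by omega)
    by_cases hpar : b % 2 = a % 2
    · rw [alternate_congr hpar] at hin
      exact IH b (by omega) (by omega) a (by omega) ((hT a).eq_of_mem ha hin)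
    · rw [alternate_congr (show b % 2 = (a + 1) % 2 by omega)] at hin
      obtain rfl | hb : b = a + 1 ∨ a + 2 < b := by omega
      · exact ((hT _).adj hin).ne rfl
      · exact IH b (by omega) (by omega) (a + 2) hb ((hT _).eq_of_mem ha' hin)

lemma exists_maximal_alternatingPath (hA : IsMatching G A) (hB : IsMatching G B)
    (ht : t ∉ supp B) :
    ∃ (n : ℕ∞) (x : ℕ → V), IsPath G n x ∧ x 0 = t ∧
      (∀ k : ℕ, (k : ℕ∞) + 1 < n → s(x k, x (k + 1)) ∈ alternate A B k) ∧
      ∀ m : ℕ, n = m + 1 → ∀ w, s(x m, w) ∉ alternate A B m := by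
  classical
  set x := altWalk A B t
  have hpath : ∀ n : ℕ∞, 1 ≤ n →
      (∀ k : ℕ, (k : ℕ∞) + 1 < n → s(x k, x (k + 1)) ∈ alternate A B k) → IsPath G n x := by
    intro n hn hval
    refine ⟨hn, fun i j hi hj hij => ?_,
      fun k hk => (isMatching_alternate hA hB k).adj (hval k hk)⟩
    by_contra hne
    wlog hlt : i < j generalizing i j
    · exact this j i hj hi hij.symm (Ne.symm hne) (by omega)
    refine altWalk_ne hA hB ht (fun k hk => hval k ?_) j le_rfl i hlt hij
    exact lt_of_le_of_lt (by exact_mod_cast hk) hj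
  by_cases hstop : ∃ k, s(x k, x (k + 1)) ∉ alternate A B k
  · have hval : ∀ k : ℕ, (k : ℕ∞) + 1 < Nat.find hstop + 1 →
        s(x k, x (k + 1)) ∈ alternate A B k := fun k hk =>
      not_not.mp (Nat.find_min hstop (Nat.lt_of_succ_lt_succ (by exact_mod_cast hk)))
    refine ⟨Nat.find hstop + 1, x, hpath _ le_add_self hval, rfl, hval, fun m hm w hw => ?_⟩
    obtain rfl : m = Nat.find hstop := Nat.succ_injective (by exact_mod_cast hm.symm)
    exact Nat.find_spec hstop (partner_mem ⟨w, hw⟩)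
  · simp only [not_exists, not_not] at hstop
    exact ⟨⊤, x, hpath ⊤ le_top fun k _ => hstop k, rfl, fun k _ => hstop k,
      fun m hm => absurd hm.symm (by exact_mod_cast ENat.natCast_ne_top (m + 1))⟩

lemma exists_alternatingPath_sdiff {N K : Set (Sym2 V)} {u : V} (hN : IsMatching G N)
    (hK : IsMatching G K) (hKN : supp K ⊆ supp N) (ht : t ∉ supp K) (htu : s(t, u) ∈ N) :
    ∃ (n : ℕ∞) (Q : ℕ → V), IsPath G n Q ∧ 1 < n ∧ Q 0 = t ∧ Q 1 = u ∧
      (∀ k : ℕ, (k : ℕ∞) + 1 < n → k % 2 = 0 → s(Q k, Q (k + 1)) ∈ N \ K) ∧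
      (∀ k : ℕ, (k : ℕ∞) + 1 < n → k % 2 = 1 → s(Q k, Q (k + 1)) ∈ K \ N) ∧
      ∀ m : ℕ, n = m + 1 → m % 2 = 1 ∧ Q m ∉ supp K := by
  obtain ⟨n, Q, hQ, rfl, hQalt, hQend⟩ := exists_maximal_alternatingPath (t := t)
    (hN.mono Set.sdiff_subset) (hK.mono Set.sdiff_subset) (A := N \ K) (B := K \ N)
    fun ⟨e, he, hte⟩ => ht ⟨e, he.1, hte⟩
  have hA : ∀ k : ℕ, (k : ℕ∞) + 1 < n → k % 2 = 0 → s(Q k, Q (k + 1)) ∈ N \ K :=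
    fun k hk hk2 => (alternate_of_mod_two_eq_zero (A := N \ K) (B := K \ N) hk2) ▸ hQalt k hk
  have hB : ∀ k : ℕ, (k : ℕ∞) + 1 < n → k % 2 = 1 → s(Q k, Q (k + 1)) ∈ K \ N :=
    fun k hk hk2 => (alternate_of_mod_two_eq_one (A := N \ K) (B := K \ N) hk2) ▸ hQalt k hk
  have htuA : s(Q 0, u) ∈ N \ K := ⟨htu, fun h => ht ⟨_, h, Sym2.mem_mk_left _ _⟩⟩
  have hn : 1 < n := by
    refine lt_of_le_of_ne hQ.1 fun h => hQend 0 (by simpa using h.symm) u ?_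
    rwa [alternate_of_mod_two_eq_zero (Nat.zero_mod 2)]
  refine ⟨n, Q, hQ, hn, rfl, (hN.mono Set.sdiff_subset).eq_of_mem
    (hA 0 (by simpa using hn) (Nat.zero_mod 2)) htuA, hA, hB, fun m hm => ?_⟩
  obtain ⟨k, rfl⟩ : ∃ k, m = k + 1 := ⟨m - 1, by
    refine (Nat.succ_pred_eq_of_pos (Nat.pos_of_ne_zero ?_)).symm
    rintro rfl
    exact hn.ne (by simpa using hm.symm)⟩
  have hk : (k : ℕ∞) + 1 < n := by
    rw [hm]
    exact_mod_cast k.succ.lt_succ_self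
  rcases Nat.mod_two_eq_zero_or_one k with hev | hodd
  · -- arriving by an edge of `N`, the `K`-edge at `Q (k + 1)` would continue the walk
    refine ⟨by omega, fun hKk => ?_⟩
    obtain ⟨w, hw⟩ := mem_supp_iff_exists.mp hKk
    refine hQend _ hm w ?_
    rw [alternate_of_mod_two_eq_one (by omega)]
    exact hN.mem_sdiff_of_mem_sdiff (hA k hk hev) hw
  · -- arriving by an edge of `K`, the `N`-edge at `Q (k + 1)` continues the walk
    obtain ⟨w, hw⟩ := mem_supp_iff_exists.mp (hKN ⟨_, (hB k hk hodd).1, Sym2.mem_mk_right _ _⟩)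
    refine (hQend _ hm w ?_).elim
    rw [alternate_of_mod_two_eq_zero (by omega)]
    exact hK.mem_sdiff_of_mem_sdiff (hB k hk hodd) hw

end AltWalk

section AltReach

variable {G : SimpleGraph V} {M : Set (Sym2 V)} {n : ℕ∞} {q : ℕ → V} {s u v : V}

def altReach (G : SimpleGraph V) (M : Set (Sym2 V)) (s : V) : Set V :=
  {v | ∃ (m : ℕ) (q : ℕ → V), 0 < m ∧ IsAltPath G M 0 (m + 1) q ∧ q 0 = s ∧ q m = v}

lemma self_notMem_altReach : s ∉ altReach G M s := by
  rintro ⟨m, q, hm, hq, h0, hm'⟩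
  have := hq.1.2.1 0 m (by simp) (by exact_mod_cast m.lt_succ_self) (h0.trans hm'.symm)
  omega

lemma IsAltPath.mem_altReach (hq : IsAltPath G M 0 n q) {m : ℕ} (hm : 0 < m)
    (hmn : (m : ℕ∞) < n) : q m ∈ altReach G M (q 0) :=
  ⟨m, q, hm, hq.mono le_add_self (Order.add_one_le_of_lt hmn), rfl, rfl⟩

lemma isAltPath_pair {p : ℕ} (h : G.Adj u v) (hp : s(u, v) ∈ M ↔ Odd p) :
    IsAltPath G M p 2 (fun k => if k = 0 then u else v) := by
  have h2 : ∀ {i : ℕ}, (i : ℕ∞) < 2 → i = 0 ∨ i = 1 := fun {i} hi => by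
    have : i < 2 := by exact_mod_cast hi
    omega
  have h1 : ∀ {i : ℕ}, (i : ℕ∞) + 1 < 2 → i = 0 := fun {i} hi => by
    have : i + 1 < 2 := by exact_mod_cast hi
    omega
  refine ⟨⟨one_le_two, fun i j hi hj hij => ?_, fun i hi => ?_⟩, fun i hi => ?_⟩
  · rcases h2 hi with rfl | rfl <;> rcases h2 hj with rfl | rfl <;> simp_all [h.ne, h.ne.symm]
  · obtain rfl := h1 hi
    simpa using h
  · obtain rfl := h1 hi
    simpa using hp

lemma mem_altReach_of_adj (hs : s ∉ supp M) (h : G.Adj s v) : v ∈ altReach G M s := by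
  have hp : s(s, v) ∈ M ↔ Odd 0 := by simpa using fun hsv => hs ⟨_, hsv, Sym2.mem_mk_left _ _⟩
  simpa using (isAltPath_pair h hp).mem_altReach one_pos (by simp)

lemma IsAltPath.mem_altReach_of_mem {m : ℕ} (hM : IsMatching G M)
    (hq : IsAltPath G M 0 (↑(m + 1) + 1) q) (hs : q 0 ∉ supp M) (hin : s(q m, q (m + 1)) ∉ M)
    (hw : s(q (m + 1), v) ∈ M) : v ∈ altReach G M (q 0) := by
  have hmn : ∀ {k : ℕ}, k ≤ m + 1 → (k : ℕ∞) < ↑(m + 1) + 1 := fun {k} hk => by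
    exact_mod_cast Nat.lt_succ_of_le hk
  have hev : m % 2 = 0 := by
    rw [← Nat.not_odd_iff, ← zero_add m, ← hq.2 m (by exact_mod_cast hmn le_rfl)]
    exact hin
  -- `v` is new: an interior vertex of the path is matched along the path
  have hfresh : ∀ i ≤ m + 1, q i ≠ v := by
    rintro i hi rfl
    obtain rfl | rfl | ⟨hi0, him⟩ : i = 0 ∨ i = m + 1 ∨ 0 < i ∧ i ≤ m := by omega
    · exact hs ⟨_, hw, Sym2.mem_mk_right _ _⟩
    · exact (hM.adj hw).ne rfl
    · obtain ⟨j, hij, hj, hjM⟩ :=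
        hq.exists_partner hi0 (by exact_mod_cast hmn (by omega : i + 1 ≤ m + 1))
      have hjm := hq.1.2.1 j (m + 1) hj (hmn le_rfl) (hM.eq_of_mem hjM (Sym2.eq_swap ▸ hw))
      obtain rfl : i = m := by omega
      exact hin (hjm ▸ hjM)
  have hpair := isAltPath_pair (M := M) (p := 0 + (m + 1)) (hM.adj hw)
    (iff_of_true hw (by rw [zero_add, Nat.odd_add_one, Nat.odd_iff]; omega))
  have hF := hq.append hpair (by simp) fun i hi k hk => by
    obtain rfl | rfl : k = 0 ∨ k = 1 := by
      have : k < 2 := by exact_mod_cast hk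
      omega
    · exact fun h => by have := hq.1.2.1 i (m + 1) (hmn (by omega)) (hmn le_rfl) h; omega
    · exact hfresh i (by omega)
  have := hF.mem_altReach (m := m + 1 + 1) (by omega)
    (by exact_mod_cast (by omega : m + 1 + 1 < m + 1 + 2))
  rwa [pathAppend_add (by simp), pathAppend_of_le (Nat.zero_le _)] at this

variable (hM : IsMatching G M) (hs : s ∉ supp M) (hNA : ¬∃ n f, IsAugmentingPath G M n f s)
include hM hs hNA

lemma exists_mem_altReach_of_mem_altReach (hv : v ∈ altReach G M s) :
    ∃ w ∈ altReach G M s, s(v, w) ∈ M := by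
  obtain ⟨m, q, hm, hq, rfl, rfl⟩ := hv
  obtain ⟨m, rfl⟩ : ∃ k, m = k + 1 := ⟨m - 1, by omega⟩
  by_cases hin : s(q m, q (m + 1)) ∈ M
  · have hodd : Odd m := by
      simpa using (hq.2 m (by exact_mod_cast (m + 1).lt_succ_self)).mp hin
    exact ⟨q m, hq.mem_altReach hodd.pos (by exact_mod_cast (by omega : m < m + 1 + 1)),
      Sym2.eq_swap ▸ hin⟩
  obtain ⟨w, hw⟩ : ∃ w, s(q (m + 1), w) ∈ M := by
    refine mem_supp_iff_exists.mp
      (not_not.mp fun hend => hNA ⟨_, q, hq.isAugmentingPath hs ?_ ?_⟩)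
    · exact_mod_cast Nat.succ_lt_succ hm
    · intro k hk
      obtain rfl : k = m + 1 := by
        have : m + 1 + 1 = k + 1 := by exact_mod_cast hk
        omega
      exact hend
  exact ⟨w, hq.mem_altReach_of_mem hM hs hin hw, hw⟩

def altReachMatching (G : SimpleGraph V) (M : Set (Sym2 V)) (s : V) : Set (Sym2 V) :=
  {e | e ∈ M ∧ ∃ v ∈ e, v ∈ altReach G M s}

omit hM hs hNA in
lemma altReachMatching_subset : altReachMatching G M s ⊆ M := fun _ he => he.1

lemma supp_altReachMatching : supp (altReachMatching G M s) = altReach G M s := by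
  ext v
  refine ⟨fun ⟨e, ⟨he, u, hue, hu⟩, hve⟩ => ?_, fun hv => ?_⟩
  · obtain ⟨w, hw, huw⟩ := exists_mem_altReach_of_mem_altReach hM hs hNA hu
    rw [hM.2 u e he _ huw hue (Sym2.mem_mk_left _ _)] at hve
    rcases Sym2.mem_iff.mp hve with rfl | rfl
    exacts [hu, hw]
  · obtain ⟨w, -, hvw⟩ := exists_mem_altReach_of_mem_altReach hM hs hNA hv
    exact ⟨_, ⟨hvw, v, Sym2.mem_mk_left _ _, hv⟩, Sym2.mem_mk_left _ _⟩

omit hM in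
/-- A path from `s` to its first vertex on `Q`, continued along the half of `Q` that keeps the
alternation, reaches an end of `Q` outside `altReach G M s` or is an infinite augmenting path. -/
lemma IsAltPath.false_of_mem_altReach_one {Q : ℕ → V} (hQ : IsAltPath G M 0 n Q) (hn : 1 < n)
    (h0 : Q 0 ∉ altReach G M s) (h1 : Q 1 ∈ altReach G M s)
    (hend : ∀ m : ℕ, n = m + 1 → Odd m ∧ Q m ∉ altReach G M s) : False := by
  classical
  obtain ⟨jm, q, -, hq, rfl, hqjm⟩ := h1
  have hex : ∃ j, ∃ c : ℕ, (c : ℕ∞) < n ∧ Q c = q j := ⟨jm, 1, by exact_mod_cast hn, hqjm.symm⟩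
  -- `q j` is the first vertex of `q` on `Q`
  obtain ⟨c, hc, hcj⟩ := Nat.find_spec hex
  set j := Nat.find hex
  have hdisj : ∀ i < j, ∀ c : ℕ, (c : ℕ∞) < n → q i ≠ Q c :=
    fun i hi c hc h => Nat.find_min hex hi ⟨c, hc, h.symm⟩
  have hjm : j ≤ jm := Nat.find_min' hex ⟨1, by exact_mod_cast hn, hqjm.symm⟩
  have hqj : IsAltPath G M 0 (j + 1) q :=
    hq.mono le_add_self (by exact_mod_cast Nat.succ_le_succ hjm)
  by_cases hpar : c % 2 = j % 2
  · obtain ⟨ℓ, rfl⟩ : ∃ ℓ, n = c + ℓ := exists_add_of_le hc.le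
    have hℓ : 1 ≤ ℓ := Order.one_le_iff_pos.mpr (pos_of_lt_add_right (by simpa using hc))
    have hF := hqj.append ((hQ.shift hℓ).of_mod_two_eq (by omega)) (by simpa using hcj)
      fun i hi k hk => hdisj i hi (c + k) (natCast_add_lt_iff.mpr hk)
    have hF0 : pathAppend q (fun k => Q (c + k)) j 0 = q 0 := pathAppend_of_le (Nat.zero_le j)
    induction ℓ using ENat.recTopCoe with
    | top =>
      refine hNA ⟨_, _, hF0 ▸ hF.isAugmentingPath (hF0 ▸ hs) ?_ fun k hk => ?_⟩
      · simp
      · exact absurd (by exact_mod_cast hk) (ENat.natCast_ne_top (k + 1)).symm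
    | coe ℓ =>
      obtain ⟨ℓ, rfl⟩ : ∃ k, ℓ = k + 1 :=
        ⟨ℓ - 1, (Nat.succ_pred_eq_of_pos (by exact_mod_cast hℓ)).symm⟩
      obtain ⟨hodd, hout⟩ := hend (c + ℓ) (by push_cast; ring)
      have := hF.mem_altReach (m := j + ℓ) (by rw [Nat.odd_iff] at hodd; omega)
        (by exact_mod_cast (by omega : j + ℓ < j + (ℓ + 1)))
      rw [pathAppend_add (by simpa using hcj), hF0] at this
      exact hout this
  · have hF := hqj.append ((hQ.reverse hc).of_mod_two_eq (by omega)) (by simpa using hcj)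
      fun i hi k hk => hdisj i hi (c - k) ((Nat.cast_le.mpr (Nat.sub_le c k)).trans_lt hc)
    have := hF.mem_altReach (m := j + c) (by omega)
      (by exact_mod_cast (by omega : j + c < j + (c + 1)))
    rw [pathAppend_add (by simpa using hcj), pathAppend_of_le (Nat.zero_le j), Nat.sub_self]
      at this
    exact h0 this

lemma false_of_isMatching_subset_supp {N : Set (Sym2 V)} {t : V} (hN : IsMatching G N)
    (hWN : altReach G M s ⊆ supp N) (ht : t ∉ altReach G M s) (hu : u ∈ altReach G M s)
    (htu : s(t, u) ∈ N) : False := by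
  set M₀ := altReachMatching G M s
  have hsupp : supp M₀ = altReach G M s := supp_altReachMatching hM hs hNA
  obtain ⟨n, Q, hQ, hn, rfl, rfl, hA, hB, hend⟩ := exists_alternatingPath_sdiff hN
    (hM.mono altReachMatching_subset) (hsupp ▸ hWN) (hsupp ▸ ht) htu
  have hQM : IsAltPath G M 0 n Q := by
    refine ⟨hQ, fun k hk => ?_⟩
    rw [zero_add, Nat.odd_iff]
    rcases Nat.mod_two_eq_zero_or_one k with hev | hodd
    · refine iff_of_false (fun hM' => (hA k hk hev).2 ?_) (by omega)
      -- an `M`-edge with an end in `altReach G M s` belongs to `M₀`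
      rcases k with _ | k
      · exact ⟨hM', Q 1, Sym2.mem_mk_right _ _, hu⟩
      · refine ⟨hM', Q (k + 1), Sym2.mem_mk_left _ _, hsupp ▸ ⟨_, (hB k ?_ (by omega)).1,
          Sym2.mem_mk_right _ _⟩⟩
        exact le_self_add.trans_lt (by simpa using hk)
    · exact iff_of_true (hB k hk hodd).1.1 hodd
  exact hQM.false_of_mem_altReach_one hs hNA hn ht hu fun m hm =>
    ⟨Nat.odd_iff.mpr (hend m hm).1, hsupp ▸ (hend m hm).2⟩

lemma indepMatching_of_supp_eq_altReach {M₂ : Set (Sym2 V)} (hM₂ : IsMatching G M₂)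
    (hsupp : supp M₂ = altReach G M s) : IndepMatching G M₂ := by
  refine ⟨hM₂, ?_⟩
  rintro ⟨t, n, f, hf, i, hi, hiM⟩
  have hf0 : f 0 ∉ supp M₂ := hf.2.2.2.1 ▸ hf.2.2.2.2.1
  -- a proper augmenting path has a second edge, which covers `f 1`
  have h1 : ((1 : ℕ) : ℕ∞) + 1 < n := by
    have : 0 < i := by simpa using ((hf.isAltPath.2 i hi).mp hiM).pos
    exact lt_of_le_of_lt (by exact_mod_cast (by omega : 1 + 1 ≤ i + 1)) hi
  obtain ⟨j, -, -, hj⟩ := hf.isAltPath.exists_partner one_pos h1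
  refine false_of_isMatching_subset_supp hM hs hNA (hf.isMatching_symmDiff hM₂)
    (hsupp ▸ hf.supp_subset_supp_symmDiff) (hsupp ▸ hf0) (hsupp ▸ ⟨_, hj, Sym2.mem_mk_left _ _⟩)
    (Set.mem_symmDiff.mpr (Or.inr ⟨⟨0, by simpa using hf.2.2.1, rfl⟩,
      fun h => hf0 ⟨_, h, Sym2.mem_mk_left _ _⟩⟩))

lemma indepSubgraph_altReach : IndepSubgraph G (altReach G M s) :=
  ⟨⟨_, hM.mono altReachMatching_subset, supp_altReachMatching hM hs hNA⟩,
    fun _ hM₂ hsupp => indepMatching_of_supp_eq_altReach hM hs hNA hM₂ hsupp⟩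

end AltReach

lemma IndepMatching.exists_adj_notMem_supp {G : SimpleGraph V} {M : Set (Sym2 V)} {n : ℕ∞}
    {f : ℕ → V} {s : V} (hM : IndepMatching G M) (h : IsAugmentingPath G M n f s) :
    ∃ v ∉ supp M, G.Adj s v := by
  have hn : n = (1 : ℕ) + 1 := by
    refine le_antisymm (not_lt.mp fun h2 => hM.2 ⟨s, n, f, h, 1, h2, ?_⟩) ?_
    · exact (h.isAltPath.2 1 h2).mpr (by simp)
    · simpa using Order.add_one_le_of_lt h.2.2.1
  exact ⟨f 1, h.2.2.2.2.2 1 hn, h.2.2.2.1 ▸ h.1.2.2 0 (by simp [hn, one_add_one_eq_two])⟩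

theorem conditionA_iff_neighbor_outside_indepSubgraphs_general {V : Type*}
    (G : SimpleGraph V) :
    ConditionA G ↔
      ∀ W : Set V, IndepSubgraph G W → ∀ s : V, s ∉ W →
        ∃ v : V, v ∉ W ∧ G.Adj s v := by
  refine ⟨fun hA W hW s hs => ?_, fun h M hM s hs => ?_⟩
  · obtain ⟨⟨M, hM, rfl⟩, hindep⟩ := hW
    obtain ⟨n, f, hf⟩ := hA M hM s hs
    obtain ⟨v, hv, hsv⟩ := (hindep M hM rfl).exists_adj_notMem_supp hf
    exact ⟨v, hv, hsv⟩
  · by_contra hNA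
    obtain ⟨v, hv, hsv⟩ := h _ (indepSubgraph_altReach hM hs hNA) s self_notMem_altReach
    exact hv (mem_altReach_of_adj hs hsv)

/-- `G` satisfies condition (A) iff for every independent subgraph `W`
and every vertex `s ∉ W` there is a neighbor of `s` outside `W`. -/
theorem conditionA_iff_neighbor_outside_indepSubgraphs {V : Type*} [Countable V]
    (G : SimpleGraph V) :
    ConditionA G ↔
      ∀ W : Set V, IndepSubgraph G W → ∀ s : V, s ∉ W →
        ∃ v : V, v ∉ W ∧ G.Adj s v :=
  conditionA_iff_neighbor_outside_indepSubgraphs_general G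

end PaperMatchings
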